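/- arXiv:1508.00962 — 2 statements merged into one kernel-verified Lean document; each statement's English description precedes it below -/
import Mathlib

section
/- A point (Ẽ, Q̃) with (Ẽ, Q̃) ≠ (E₀, Q₀), 0 ≤ Ẽ < E₀, 0 ≤ Q̃ < Q₀ is reachable from (E₀, Q₀) by some admissible power schedule p : [0,T] → [0, p_max] if and only if the line r = K·p with K = (Q₀ - Q̃)/(E₀ - Ẽ) intersects the curve r = log₂(1+p) at some p ∈ (0, p_max]. -/
/-!
If the line `r = K p` meets `r = log₂(1 + p)` at some `q ∈ (0, p_max]`, the constant schedule
`p ≡ q` run for time `(E₀ - Ẽ) / q` reaches the target. Conversely, along any schedule the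
integrand `log₂(1 + p) - K p` integrates to `(Q₀ - Q̃) - K (E₀ - Ẽ) = 0`. Without an intersection
point this continuous function has a constant sign on `(0, p_max]` and vanishes only at `0`,
so the schedule is almost everywhere `0` and cannot spend the energy `E₀ - Ẽ > 0`.
-/

open MeasureTheory Set

variable {α : Type*} [MeasurableSpace α] {μ : Measure α}

lemma MeasureTheory.Integrable.log_one_add {p : α → ℝ} (hp : Integrable p μ) (hp0 : 0 ≤ᵐ[μ] p) :
    Integrable (fun t => Real.log (1 + p t)) μ := by
  have hmeas := Real.measurable_log.comp_aemeasurable (hp.aemeasurable.const_add 1)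
  refine hp.mono' hmeas.aestronglyMeasurable (hp0.mono fun t (ht : 0 ≤ p t) => ?_)
  rw [Real.norm_of_nonneg (Real.log_nonneg (by linarith))]
  linarith [Real.log_le_sub_one_of_pos (by linarith : 0 < 1 + p t)]

lemma MeasureTheory.Integrable.logb_one_add {p : α → ℝ} (hp : Integrable p μ) (hp0 : 0 ≤ᵐ[μ] p)
    (b : ℝ) :
    Integrable (fun t => Real.logb b (1 + p t)) μ :=
  (hp.log_one_add hp0).div_const (Real.log b)

lemma ae_eq_zero_of_integral_comp_eq_zero_of_pos {φ : ℝ → ℝ} {a : ℝ} {p : α → ℝ}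
    (hφ0 : φ 0 = 0) (hpos : ∀ x ∈ Ioc 0 a, 0 < φ x) (hp : ∀ᵐ t ∂μ, p t ∈ Icc 0 a)
    (hint : Integrable (fun t => φ (p t)) μ) (h : ∫ t, φ (p t) ∂μ = 0) : p =ᵐ[μ] 0 := by
  have hnonneg : 0 ≤ᵐ[μ] fun t => φ (p t) := hp.mono fun t ht => by
    rcases ht.1.eq_or_lt with heq | hlt
    · simp [← heq, hφ0]
    · exact (hpos _ ⟨hlt, ht.2⟩).le
  filter_upwards [(integral_eq_zero_iff_of_nonneg_ae hnonneg hint).mp h, hp] with t hφt ht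
  by_contra hpt
  exact (hpos _ ⟨ht.1.lt_of_ne (Ne.symm hpt), ht.2⟩).ne' hφt

lemma ae_eq_zero_of_integral_comp_eq_zero {φ : ℝ → ℝ} {a : ℝ} {p : α → ℝ}
    (hφ : ContinuousOn φ (Ioc 0 a)) (hφ0 : φ 0 = 0) (hne : ∀ x ∈ Ioc 0 a, φ x ≠ 0)
    (hp : ∀ᵐ t ∂μ, p t ∈ Icc 0 a) (hint : Integrable (fun t => φ (p t)) μ)
    (h : ∫ t, φ (p t) ∂μ = 0) : p =ᵐ[μ] 0 := by
  rcases isPreconnected_Ioc.mapsTo_Ioi_or_Iio hφ hne with hpos | hneg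
  · exact ae_eq_zero_of_integral_comp_eq_zero_of_pos hφ0 hpos hp hint h
  · refine ae_eq_zero_of_integral_comp_eq_zero_of_pos (φ := -φ) (by simp [hφ0])
      (fun x hx => neg_pos.2 (hneg hx)) hp hint.neg ?_
    simp [integral_neg, h]

theorem reachable_iff_RPE_general (E₀ Q₀ pmax : ℝ)
    (Et Qt : ℝ) (hEt' : Et < E₀) :
    (∃ T : ℝ, 0 ≤ T ∧ ∃ p : ℝ → ℝ,
        (∀ t ∈ Set.Icc 0 T, p t ∈ Set.Icc 0 pmax) ∧
        IntegrableOn p (Set.Icc 0 T) ∧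
        (∫ t in Set.Icc 0 T, p t) = E₀ - Et ∧
        (∫ t in Set.Icc 0 T, Real.logb 2 (1 + p t)) = Q₀ - Qt) ↔
    (∃ p : ℝ, p ∈ Set.Ioc 0 pmax ∧
        ((Q₀ - Qt) / (E₀ - Et)) * p = Real.logb 2 (1 + p)) := by
  have hD : 0 < E₀ - Et := sub_pos.2 hEt'
  constructor
  · rintro ⟨T, -, p, hp, hint, hE, hQ⟩
    by_contra! hno
    set K := (Q₀ - Qt) / (E₀ - Et)
    have hp' : ∀ᵐ t ∂volume.restrict (Icc 0 T), p t ∈ Icc 0 pmax :=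
      ae_restrict_of_forall_mem measurableSet_Icc hp
    have hlog := hint.logb_one_add (hp'.mono fun t ht => ht.1) 2
    have hφ : ContinuousOn (fun x => Real.logb 2 (1 + x) - K * x) (Ioc 0 pmax) := fun x hx =>
      ((Real.continuousAt_logb (by linarith [hx.1])).comp (by fun_prop)).sub
        (by fun_prop) |>.continuousWithinAt
    have hzero : p =ᵐ[volume.restrict (Icc 0 T)] 0 :=
      ae_eq_zero_of_integral_comp_eq_zero hφ (by simp)
        (fun x hx => sub_ne_zero.2 (hno x hx).symm) hp' (hlog.sub (hint.const_mul K)) (by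
          rw [integral_sub hlog (hint.const_mul K), integral_const_mul, hE, hQ,
            div_mul_cancel₀ _ hD.ne', sub_self])
    linarith [integral_eq_zero_of_ae hzero]
  · rintro ⟨q, ⟨hq0, hqm⟩, hqe⟩
    have hT : 0 ≤ (E₀ - Et) / q := (div_pos hD hq0).le
    refine ⟨_, hT, fun _ => q, fun _ _ => ⟨hq0.le, hqm⟩, integrableOn_const measure_Icc_lt_top.ne,
      ?_, ?_⟩ <;> rw [setIntegral_const, Real.volume_real_Icc_of_le hT, smul_eq_mul, sub_zero]
    · field_simp
    · rw [← hqe]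
      field_simp

/-- A point (Et, Qt) with 0 ≤ Et < E₀, 0 ≤ Qt < Q₀ is reachable from (E₀, Q₀) by an
admissible schedule iff the line r = K·p, K = (Q₀ - Qt)/(E₀ - Et), intersects
r = log₂(1+p) at some p ∈ (0, p_max]. -/
theorem reachable_iff_RPE (E₀ Q₀ pmax : ℝ)
    (hE₀ : 0 < E₀) (hQ₀ : 0 < Q₀) (hpmax : 0 < pmax)
    (Et Qt : ℝ) (hEt : 0 ≤ Et) (hEt' : Et < E₀) (hQt : 0 ≤ Qt) (hQt' : Qt < Q₀) :
    (∃ T : ℝ, 0 ≤ T ∧ ∃ p : ℝ → ℝ,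
        (∀ t ∈ Set.Icc 0 T, p t ∈ Set.Icc 0 pmax) ∧
        IntegrableOn p (Set.Icc 0 T) ∧
        (∫ t in Set.Icc 0 T, p t) = E₀ - Et ∧
        (∫ t in Set.Icc 0 T, Real.logb 2 (1 + p t)) = Q₀ - Qt) ↔
    (∃ p : ℝ, p ∈ Set.Ioc 0 pmax ∧
        ((Q₀ - Qt) / (E₀ - Et)) * p = Real.logb 2 (1 + p)) :=
  reachable_iff_RPE_general E₀ Q₀ pmax Et Qt hEt'
end

section
/- Fix Q₀ > 0 and E₀ > 0. For 0 ≤ Ẽ < E₀, let K(Ẽ) = Q₀/(E₀ - Ẽ) and suppose K(Ẽ) ∈ (0, 1/ln 2) so that the RPE power p^e(Ẽ) exists as the unique positive solution of K(Ẽ)·p = log₂(1+p). Then the minimum transmission time T(Ẽ) = (E₀ - Ẽ)/p^e(Ẽ) is strictly increasing in Ẽ. -/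
/-!
The RPE equation `K p = log₂ (1 + p)` says that `K` is the slope of the chord from the origin
of the strictly concave map `p ↦ log₂ (1 + p)`, and that slope strictly decreases in `p`.
A larger residual energy `Ẽ` gives a larger `K`, hence a smaller `p^e`, and
`T = (E₀ - Ẽ) / p^e = Q₀ / (K p^e) = Q₀ / log₂ (1 + p^e)` grows as `p^e` shrinks.
-/

open Real Set

lemma strictAntiOn_log_one_add_div_self :
    StrictAntiOn (fun x : ℝ => log (1 + x) / x) (Ioi 0) := by
  intro x hx y hy hxy
  have hx' : (1 : ℝ) + x ∈ Ioi 0 := by simp only [mem_Ioi] at hx ⊢; linarith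
  have hy' : (1 : ℝ) + y ∈ Ioi 0 := by simp only [mem_Ioi] at hy ⊢; linarith
  have := strictConcaveOn_log_Ioi.secant_strict_mono (zero_lt_one' ℝ) hx' hy'
    (by simpa using (ne_of_gt hx)) (by simpa using (ne_of_gt hy)) (by linarith)
  simpa only [log_one, sub_zero, add_sub_cancel_left] using this

lemma strictAntiOn_logb_one_add_div_self {b : ℝ} (hb : 1 < b) :
    StrictAntiOn (fun x : ℝ => logb b (1 + x) / x) (Ioi 0) := by
  intro x hx y hy hxy
  simp only [logb, div_right_comm _ (log b)]
  exact div_lt_div_of_pos_right (strictAntiOn_log_one_add_div_self hx hy hxy) (log_pos hb)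

theorem min_time_strictMono_general (E₀ Q₀ : ℝ) (hQ₀ : 0 < Q₀)
    (Et₁ Et₂ p₁ p₂ : ℝ)
    (hEt₂' : Et₂ < E₀)
    (hp₁ : 0 < p₁) (hpe₁ : (Q₀ / (E₀ - Et₁)) * p₁ = Real.logb 2 (1 + p₁))
    (hp₂ : 0 < p₂) (hpe₂ : (Q₀ / (E₀ - Et₂)) * p₂ = Real.logb 2 (1 + p₂))
    (hlt : Et₁ < Et₂) :
    (E₀ - Et₁) / p₁ < (E₀ - Et₂) / p₂ := by
  have hd₂ : 0 < E₀ - Et₂ := sub_pos.2 hEt₂'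
  have hK : Q₀ / (E₀ - Et₁) < Q₀ / (E₀ - Et₂) :=
    div_lt_div_of_pos_left hQ₀ hd₂ (by linarith)
  have hp : p₂ < p₁ := by
    rw [eq_div_of_mul_eq hp₁.ne' hpe₁, eq_div_of_mul_eq hp₂.ne' hpe₂] at hK
    exact ((strictAntiOn_logb_one_add_div_self one_lt_two).lt_iff_gt hp₁ hp₂).mp hK
  have hT : ∀ d p : ℝ, d / p = Q₀ / (Q₀ / d * p) := fun d p => by
    rw [div_mul_eq_mul_div, div_div_eq_mul_div, mul_div_mul_left _ _ hQ₀.ne']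
  rw [hT (E₀ - Et₁), hpe₁, hT (E₀ - Et₂), hpe₂]
  exact div_lt_div_of_pos_left hQ₀ (logb_pos one_lt_two (by linarith))
    (logb_lt_logb one_lt_two (by linarith) (by linarith))

/-- The minimum transmission time T(Et) = (E₀ - Et)/p^e(Et), where p^e(Et) is the
unique positive solution of (Q₀/(E₀ - Et))·p = log₂(1+p), is strictly increasing
in Et. -/
theorem min_time_strictMono (E₀ Q₀ : ℝ) (hE₀ : 0 < E₀) (hQ₀ : 0 < Q₀)
    (Et₁ Et₂ p₁ p₂ : ℝ)
    (hEt₁ : 0 ≤ Et₁) (hEt₁' : Et₁ < E₀) (hEt₂ : 0 ≤ Et₂) (hEt₂' : Et₂ < E₀)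
    (hK₁ : Q₀ / (E₀ - Et₁) < 1 / Real.log 2)
    (hK₂ : Q₀ / (E₀ - Et₂) < 1 / Real.log 2)
    (hp₁ : 0 < p₁) (hpe₁ : (Q₀ / (E₀ - Et₁)) * p₁ = Real.logb 2 (1 + p₁))
    (hp₂ : 0 < p₂) (hpe₂ : (Q₀ / (E₀ - Et₂)) * p₂ = Real.logb 2 (1 + p₂))
    (hlt : Et₁ < Et₂) :
    (E₀ - Et₁) / p₁ < (E₀ - Et₂) / p₂ :=
  min_time_strictMono_general E₀ Q₀ hQ₀ Et₁ Et₂ p₁ p₂ hEt₂' hp₁ hpe₁ hp₂ hpe₂ hlt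
end
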